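/- Let p be an odd prime, β ≥ 1, let a ∈ ℤ/p^βℤ with p dividing a, and let b be a unit of ℤ/p^βℤ. Then the Salié sum satisfies | Σ_{x ∈ (ℤ/p^βℤ)^×} η(x) · exp(2πi(a x^{−1} + b x)/p^β) | ≤ p^{β/2}, where η(x) denotes the Legendre symbol (x mod p / p). -/

import Mathlib

/-!
For `β = 1` the hypothesis `p ∣ a` forces `a = 0`, and the sum is the Gauss sum of the quadratic
character of `𝔽_p` against a primitive additive character, of absolute value exactly `√p`.

For `β ≥ 2` put `c = p^(β-1)`, so that `c² = 0` and `c a = 0`. The substitution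
`x ↦ x (1 + c y)` then fixes `η(x)` and `a x⁻¹` and multiplies the summand by `ψ(y c b x)`.
Averaging over `y`, the sum gets multiplied by `∑_y ψ(y c b x) = 0` (as `c b x ≠ 0`), so it vanishes.
-/

noncomputable def eZMod (q : ℕ) (c : ZMod q) : ℂ :=
  Complex.exp (2 * Real.pi * Complex.I * c.val / q)

lemma eZMod_eq_stdAddChar (q : ℕ) [NeZero q] (c : ZMod q) : eZMod q c = ZMod.stdAddChar c := by
  rw [ZMod.stdAddChar_apply, ZMod.toCircle_apply, eZMod]

lemma legendreSym_val_eq_quadraticChar_castHom {p n : ℕ} [Fact p.Prime] [NeZero n] (h : p ∣ n)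
    (x : ZMod n) : legendreSym p x.val = quadraticChar (ZMod p) (ZMod.castHom h (ZMod p) x) := by
  rw [legendreSym, Int.cast_natCast, ZMod.natCast_val, ZMod.castHom_apply]

lemma norm_gaussSum {F : Type*} [Field F] [Fintype F] {χ : MulChar F ℂ} (hχ : χ ≠ 1)
    {ψ : AddChar F ℂ} (hψ : ψ.IsPrimitive) : ‖gaussSum χ ψ‖ = √(Fintype.card F) := by
  have h := gaussSum_mul_gaussSum_eq_card hχ hψ
  rw [← star_gaussSum_eq, Complex.star_def, Complex.mul_conj'] at h
  rw [← Real.sqrt_sq (norm_nonneg _)]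
  exact congrArg Real.sqrt (by exact_mod_cast h)

section TwistedKloosterman

variable {R : Type*} [CommRing R] [Fintype R] [Fintype Rˣ]

noncomputable def twistedKloostermanSum (η : R → ℂ) (ψ : AddChar R ℂ) (a b : R) : ℂ :=
  ∑ x : Rˣ, η x * ψ (a * ↑x⁻¹ + b * x)

lemma twistedKloostermanSum_zero_left (χ : MulChar R ℂ) (ψ : AddChar R ℂ) (b : R) :
    twistedKloostermanSum χ ψ 0 b = gaussSum χ (ψ.mulShift b) := by
  classical
  rw [twistedKloostermanSum, gaussSum]
  refine Fintype.sum_of_injective _ Units.val_injective _ _ (fun x hx => ?_) (fun x => ?_)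
  · rw [χ.map_nonunit (fun hu => hx ⟨hu.unit, rfl⟩), zero_mul]
  · rw [zero_mul, zero_add, AddChar.mulShift_apply]

theorem twistedKloostermanSum_eq_zero_of_mul_self_eq_zero {η : R → ℂ} {ψ : AddChar R ℂ}
    (hψ : ψ.IsPrimitive) {a b c : R} (hb : IsUnit b) (hc : c ≠ 0) (hcc : c * c = 0)
    (hca : c * a = 0) (hη : ∀ x y, η (x * (1 + c * y)) = η x) :
    twistedKloostermanSum η ψ a b = 0 := by
  classical
  set f : Rˣ → ℂ := fun x => η x * ψ (a * ↑x⁻¹ + b * x)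
  let u (y : R) : Rˣ := Units.mkOfMulEqOne (1 + c * y) (1 - c * y) (by
    linear_combination (-y ^ 2) * hcc)
  have hshift (y : R) :
      twistedKloostermanSum η ψ a b = ∑ x : Rˣ, f x * ψ (y * (c * b * x)) := by
    rw [twistedKloostermanSum, ← Fintype.sum_equiv (Equiv.mulRight (u y)) _ _ fun _ => rfl]
    refine Fintype.sum_congr _ _ fun x => ?_
    have hu : (u y : R) = 1 + c * y := rfl
    have hu_inv : (↑(u y)⁻¹ : R) = 1 - c * y := rfl
    have hphase : a * ↑(x * u y)⁻¹ + b * ↑(x * u y) = (a * ↑x⁻¹ + b * x) + y * (c * b * x) := by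
      rw [mul_inv, Units.val_mul, Units.val_mul, hu, hu_inv]
      linear_combination (-(y * ↑x⁻¹)) * hca
    simp only [f, Equiv.coe_mulRight]
    rw [hphase, AddChar.map_add_eq_mul, Units.val_mul, hu, hη, mul_assoc (η x)]
  have hcard : (Fintype.card R : ℂ) * twistedKloostermanSum η ψ a b = 0 := calc
    _ = ∑ y : R, ∑ x : Rˣ, f x * ψ (y * (c * b * x)) := by
      rw [← Finset.sum_congr rfl fun y _ => hshift y, Finset.sum_const, nsmul_eq_mul]; rfl
    _ = ∑ x : Rˣ, f x * ∑ y : R, ψ (y * (c * b * x)) := by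
      rw [Finset.sum_comm]; simp only [Finset.mul_sum]
    _ = 0 := Finset.sum_eq_zero fun x _ => by
      have hcbx : c * b * x ≠ 0 := by
        rw [mul_assoc]
        exact mt (hb.mul x.isUnit).mul_left_eq_zero.mp hc
      rw [AddChar.sum_mulShift _ hψ, if_neg hcbx, Nat.cast_zero, mul_zero]
  exact (mul_eq_zero.mp hcard).resolve_left (Nat.cast_ne_zero.mpr Fintype.card_ne_zero)

end TwistedKloosterman

lemma norm_twistedKloostermanSum_legendreSym_zero_left {p : ℕ} [Fact p.Prime] (hodd : Odd p)
    {b : ZMod p} (hb : b ≠ 0) :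
    ‖twistedKloostermanSum (fun x : ZMod p => (legendreSym p x.val : ℂ)) ZMod.stdAddChar 0 b‖ =
      √p := by
  set χ : MulChar (ZMod p) ℂ := (quadraticChar (ZMod p)).ringHomComp (Int.castRingHom ℂ)
  have hχ : χ ≠ 1 := by
    refine (MulChar.ringHomComp_ne_one_iff Int.cast_injective).mpr (quadraticChar_ne_one ?_)
    rw [ZMod.ringChar_zmod_n]
    rintro rfl
    exact Nat.not_odd_iff_even.mpr even_two hodd
  have hη : (fun x : ZMod p => (legendreSym p x.val : ℂ)) = χ := funext fun x => by
    rw [legendreSym_val_eq_quadraticChar_castHom dvd_rfl, ZMod.castHom_self]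
    rfl
  rw [hη, twistedKloostermanSum_zero_left,
    norm_gaussSum hχ (AddChar.IsPrimitive.of_ne_one (ZMod.isPrimitive_stdAddChar p hb)),
    ZMod.card]

lemma twistedKloostermanSum_legendreSym_eq_zero {p β : ℕ} [Fact p.Prime] (hβ : 2 ≤ β)
    {a b : ZMod (p ^ β)} (ha : (p : ZMod (p ^ β)) ∣ a) (hb : IsUnit b) :
    twistedKloostermanSum (fun x : ZMod (p ^ β) => (legendreSym p x.val : ℂ)) ZMod.stdAddChar
      a b = 0 := by
  have hp : p.Prime := Fact.out
  have hpβ : p ∣ p ^ β := dvd_pow_self p (by omega)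
  set c : ZMod (p ^ β) := ((p ^ (β - 1) : ℕ) : ZMod (p ^ β))
  have hc : c ≠ 0 := by
    rw [Ne, ZMod.natCast_eq_zero_iff, Nat.pow_dvd_pow_iff_le_right hp.one_lt]
    omega
  have hcc : c * c = 0 := by
    rw [← Nat.cast_mul, ← pow_add, ZMod.natCast_eq_zero_iff]
    exact pow_dvd_pow p (by omega)
  have hca : c * a = 0 := by
    obtain ⟨d, rfl⟩ := ha
    rw [← mul_assoc, ← Nat.cast_mul, ← pow_succ, Nat.sub_add_cancel (by omega),
      ZMod.natCast_self, zero_mul]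
  have hcp : ZMod.castHom hpβ (ZMod p) c = 0 := by
    rw [map_natCast, ZMod.natCast_eq_zero_iff]
    exact dvd_pow_self p (by omega)
  refine twistedKloostermanSum_eq_zero_of_mul_self_eq_zero (ZMod.isPrimitive_stdAddChar _) hb
    hc hcc hca fun x y => ?_
  simp only [legendreSym_val_eq_quadraticChar_castHom hpβ, map_mul, map_add, hcp, zero_mul,
    add_zero, map_one, mul_one]

/-- **Salié sum bound in the degenerate case.** Let `p` be an odd prime, `β ≥ 1`,
`a ∈ ℤ/p^βℤ` with `p ∣ a`, and `b` a unit of `ℤ/p^βℤ`. Then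
`|Σ_{x ∈ (ℤ/p^βℤ)ˣ} η(x)·exp(2πi(ax⁻¹+bx)/p^β)| ≤ p^{β/2}`, where `η(x)` is the
Legendre symbol of `x mod p`. -/
theorem salie_sum_bound_degenerate (p β : ℕ) [Fact p.Prime] (hodd : Odd p) (hβ : 1 ≤ β)
    (a b : ZMod (p ^ β)) (ha : (p : ZMod (p ^ β)) ∣ a) (hb : IsUnit b) :
    ‖(∑ x : (ZMod (p ^ β))ˣ,
        (legendreSym p ((x : ZMod (p ^ β)).val) : ℂ) *
          eZMod (p ^ β) (a * ((x⁻¹ : (ZMod (p ^ β))ˣ) : ZMod (p ^ β)) +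
            b * (x : ZMod (p ^ β))))‖ ≤
      (p : ℝ) ^ ((β : ℝ) / 2) := by
  have : NeZero (p ^ β) := ⟨pow_ne_zero _ (Fact.out : p.Prime).ne_zero⟩
  simp only [eZMod_eq_stdAddChar]
  change ‖twistedKloostermanSum (fun x => (legendreSym p x.val : ℂ)) ZMod.stdAddChar a b‖ ≤ _
  obtain rfl | hβ2 : β = 1 ∨ 2 ≤ β := by omega
  · rw [(ZMod.natCast_eq_zero_iff _ _).mpr (pow_one p).dvd, zero_dvd_iff] at ha
    subst ha
    -- the instance `NeZero (p ^ 1)` must be reverted too, or rewriting `p ^ 1` breaks the motive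
    revert b this
    rw [pow_one]
    intro b hb _
    rw [norm_twistedKloostermanSum_legendreSym_zero_left hodd hb.ne_zero, Nat.cast_one,
      Real.sqrt_eq_rpow]
  · rw [twistedKloostermanSum_legendreSym_eq_zero hβ2 ha hb, norm_zero]
    positivity
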